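/- arXiv:2505.05764 — 2 statements merged into one kernel-verified Lean document; each statement's English description precedes it below -/
import Mathlib

section
/- Let S be a Cu-semigroup, let y be a full element of S, and let (y_n)_{n≥1} be a sequence of full elements of S with y_n ≤ y_{n+1} ≤ y for all n. Assume that F_y(S) = ∅ and that lim_{n→∞} ρ(y, y_n) = ∞ (the sequence (ρ(y,y_n)) is decreasing, so the limit exists in [0,∞]). Then: (1) F_{y_n}(S) ≠ ∅ for every n; (2) if rc(S, y_m) < ∞ for some m, then lim_{n→∞} rc(S, n·y_n) = rc(S, y) = 0. -/
open scoped ENNReal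

/-- `x' ≪ x`: for every increasing sequence whose supremum is `≥ x`,
some term of the sequence dominates `x'`. -/
def CuWayBelow {S : Type*} [Preorder S] (x' x : S) : Prop :=
  ∀ f : ℕ → S, Monotone f → ∀ s : S, IsLUB (Set.range f) s → x ≤ s → ∃ n, x' ≤ f n

/-- A `Cu`-semigroup: a partially ordered abelian monoid whose least element is `0`,
satisfying the axioms (O1)–(O4). -/
class CuSemigroup (S : Type*) extends AddCommMonoid S, PartialOrder S, IsOrderedAddMonoid S where
  zero_le : ∀ x : S, 0 ≤ x
  O1 : ∀ f : ℕ → S, Monotone f → ∃ s : S, IsLUB (Set.range f) s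
  O2 : ∀ x : S, ∃ f : ℕ → S, (∀ n, CuWayBelow (f n) (f (n + 1))) ∧ IsLUB (Set.range f) x
  O3 : ∀ {x' x y' y : S}, CuWayBelow x' x → CuWayBelow y' y → CuWayBelow (x' + y') (x + y)
  O4 : ∀ f g : ℕ → S, Monotone f → Monotone g → ∀ a b : S,
      IsLUB (Set.range f) a → IsLUB (Set.range g) b →
      IsLUB (Set.range fun n => f n + g n) (a + b)

/-- A functional on a `Cu`-semigroup: a map `S → [0,∞]` which is additive, order
preserving, sends `0` to `0`, and preserves suprema of increasing sequences. -/
structure IsCuFunctional {S : Type*} [CuSemigroup S] (Λ : S → ℝ≥0∞) : Prop where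
  map_zero : Λ 0 = 0
  map_add : ∀ x y : S, Λ (x + y) = Λ x + Λ y
  mono : Monotone Λ
  map_sup : ∀ f : ℕ → S, Monotone f → ∀ s : S, IsLUB (Set.range f) s → Λ s = ⨆ n, Λ (f n)

/-- `x` is full if `∞ · x = sup_n (n • x)` is the largest element of `S`. -/
def IsFull {S : Type*} [CuSemigroup S] (x : S) : Prop :=
  ∀ s : S, IsLUB (Set.range fun n : ℕ => n • x) s → ∀ y : S, y ≤ s

/-- `F_w(S) ≠ ∅`: there exists a functional normalized at `w`. -/
def FNormNonempty {S : Type*} [CuSemigroup S] (w : S) : Prop :=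
  ∃ Λ : S → ℝ≥0∞, IsCuFunctional Λ ∧ Λ w = 1

/-- The rank ratio `ρ(x, y)`: the infimum of all `r ∈ (0,∞)` with
`λ(x) ≤ r·λ(y)` for every functional `λ`; `∞` if there is no such `r`. -/
noncomputable def rankRatio {S : Type*} [CuSemigroup S] (x y : S) : ℝ≥0∞ :=
  sInf {r : ℝ≥0∞ | 0 < r ∧ r ≠ ⊤ ∧ ∀ Λ : S → ℝ≥0∞, IsCuFunctional Λ → Λ x ≤ r * Λ y}

/-- `S` has `r`-comparison relative to `w`. -/
def HasRComparison {S : Type*} [CuSemigroup S] (r : ℝ≥0∞) (w : S) : Prop :=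
  ∀ x y : S, (∀ Λ : S → ℝ≥0∞, IsCuFunctional Λ → Λ x + r * Λ w ≤ Λ y) → x ≤ y

/-- The radius of comparison of `S` relative to `w`: the infimum of all `r ∈ (0,∞)`
for which `S` has `r`-comparison relative to `w`; `∞` if there is no such `r`. -/
noncomputable def rc {S : Type*} [CuSemigroup S] (w : S) : ℝ≥0∞ :=
  sInf {r : ℝ≥0∞ | 0 < r ∧ r ≠ ⊤ ∧ HasRComparison r w}

/-! `F_y(S) = ∅` forces every functional to be `0` or `∞` at `y`; at a full element the value `0`
kills the functional altogether, so comparison relative to `y` at any radius `r > 0` is inherited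
from comparison relative to a single `y_m` with `rc(S, y_m) < ∞`, whence `rc(S, y) = 0`. The same
`y_m` gives `rc(S, n · y_n) ≤ rc(S, n · y_m) ≤ rc(S, y_m) / n → 0`. Finally `ρ(y, y_n) = ∞` yields a
functional `λ` with `λ(y_n) < λ(y)`; fullness of `y_n` makes `λ(y_n) ≠ 0`, and rescaling `λ`
normalizes it at `y_n`. -/

section

variable {S : Type*} [CuSemigroup S]

namespace IsCuFunctional

variable {Λ : S → ℝ≥0∞}

lemma map_nsmul (hΛ : IsCuFunctional Λ) (n : ℕ) (x : S) : Λ (n • x) = n * Λ x := by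
  induction n with
  | zero => simp [hΛ.map_zero]
  | succ k ih => rw [succ_nsmul, hΛ.map_add, ih, Nat.cast_succ, add_mul, one_mul]

lemma const_mul (hΛ : IsCuFunctional Λ) (c : ℝ≥0∞) : IsCuFunctional (fun x => c * Λ x) where
  map_zero := by simp [hΛ.map_zero]
  map_add x y := by simp only [hΛ.map_add, mul_add]
  mono _ _ h := mul_le_mul_right (hΛ.mono h) c
  map_sup f hf s hs := by rw [hΛ.map_sup f hf s hs, ENNReal.mul_iSup]

end IsCuFunctional

lemma IsFull.map_eq_zero {w : S} (hw : IsFull w) {Λ : S → ℝ≥0∞} (hΛ : IsCuFunctional Λ)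
    (hΛw : Λ w = 0) (x : S) : Λ x = 0 := by
  have hmono : Monotone (fun n : ℕ => n • w) :=
    monotone_nat_of_le_succ fun n => by
      rw [succ_nsmul]
      exact le_add_of_nonneg_right (CuSemigroup.zero_le w)
  obtain ⟨s, hs⟩ := CuSemigroup.O1 _ hmono
  have hΛs : Λ s = 0 := by simp [hΛ.map_sup _ hmono s hs, hΛ.map_nsmul, hΛw]
  exact le_antisymm (hΛs ▸ hΛ.mono (hw s hs x)) zero_le

lemma fNormNonempty_of_ne_zero_of_ne_top {w : S} {Λ : S → ℝ≥0∞} (hΛ : IsCuFunctional Λ)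
    (h0 : Λ w ≠ 0) (htop : Λ w ≠ ⊤) : FNormNonempty w :=
  ⟨fun x => (Λ w)⁻¹ * Λ x, hΛ.const_mul _, ENNReal.inv_mul_cancel h0 htop⟩

lemma IsCuFunctional.map_eq_zero_or_top {w : S} (hw : ¬ FNormNonempty w) {Λ : S → ℝ≥0∞}
    (hΛ : IsCuFunctional Λ) : Λ w = 0 ∨ Λ w = ⊤ := by
  by_contra! h
  exact hw (fNormNonempty_of_ne_zero_of_ne_top hΛ h.1 h.2)

lemma rankRatio_le_one {x w : S} (h : ∀ Λ : S → ℝ≥0∞, IsCuFunctional Λ → Λ x ≤ Λ w) :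
    rankRatio x w ≤ 1 :=
  sInf_le ⟨zero_lt_one, ENNReal.one_ne_top, fun Λ hΛ => (one_mul (Λ w)).symm ▸ h Λ hΛ⟩

lemma IsFull.fNormNonempty_of_rankRatio_eq_top {x w : S} (hw : IsFull w)
    (h : rankRatio x w = ⊤) : FNormNonempty w := by
  obtain ⟨Λ, hΛ, hlt⟩ : ∃ Λ : S → ℝ≥0∞, IsCuFunctional Λ ∧ Λ w < Λ x := by
    by_contra! hall
    simpa [h] using rankRatio_le_one hall
  refine fNormNonempty_of_ne_zero_of_ne_top hΛ (fun h0 => ?_) hlt.ne_top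
  simp [h0, hw.map_eq_zero hΛ h0 x] at hlt

namespace HasRComparison

variable {r r' : ℝ≥0∞} {w w' : S}

lemma of_forall_le (h : HasRComparison r w)
    (hle : ∀ Λ : S → ℝ≥0∞, IsCuFunctional Λ → r * Λ w ≤ r' * Λ w') :
    HasRComparison r' w' :=
  fun x z hxz => h x z fun Λ hΛ => (add_le_add_right (hle Λ hΛ) _).trans (hxz Λ hΛ)

lemma mono_right (h : HasRComparison r w) (hww' : w ≤ w') : HasRComparison r w' :=
  h.of_forall_le fun _ hΛ => mul_le_mul_right (hΛ.mono hww') r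

lemma nsmul (h : HasRComparison r w) {n : ℕ} (hn : n ≠ 0) : HasRComparison (r / n) (n • w) :=
  h.of_forall_le fun Λ hΛ => by
    rw [hΛ.map_nsmul, ← mul_assoc, ENNReal.div_mul_cancel (Nat.cast_ne_zero.mpr hn)
      (ENNReal.natCast_ne_top n)]

lemma of_not_fNormNonempty (h : HasRComparison r' w') (hw : IsFull w)
    (hFw : ¬ FNormNonempty w) (hr : r ≠ 0) : HasRComparison r w :=
  h.of_forall_le fun Λ hΛ => by
    rcases hΛ.map_eq_zero_or_top hFw with h0 | htop
    · simp [hw.map_eq_zero hΛ h0]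
    · simp [htop, ENNReal.mul_top hr]

end HasRComparison

lemma rc_le {r : ℝ≥0∞} {w : S} (hr : 0 < r) (hr' : r ≠ ⊤) (h : HasRComparison r w) :
    rc w ≤ r :=
  sInf_le ⟨hr, hr', h⟩

lemma exists_hasRComparison_of_rc_ne_top {w : S} (h : rc w ≠ ⊤) :
    ∃ r, 0 < r ∧ r ≠ ⊤ ∧ HasRComparison r w := by
  by_contra! hnone
  exact h (sInf_eq_top.mpr fun r ⟨hr, hr', hrw⟩ => absurd hrw (hnone r hr hr'))

lemma rc_eq_zero {w : S} (h : ∀ r : ℝ≥0∞, r ≠ 0 → HasRComparison r w) : rc w = 0 :=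
  nonpos_iff_eq_zero.mp <| ENNReal.le_of_forall_pos_le_add fun ε hε _ => by
    simpa using rc_le (by simpa using hε) ENNReal.coe_ne_top (h ε (by simpa using hε.ne'))

lemma rc_antitone {w w' : S} (hww' : w ≤ w') : rc w' ≤ rc w :=
  sInf_le_sInf fun _ ⟨hr, hr', h⟩ => ⟨hr, hr', h.mono_right hww'⟩

lemma rc_nsmul_le (w : S) {n : ℕ} (hn : n ≠ 0) : rc (n • w) ≤ rc w / n := by
  have hn₀ : (n : ℝ≥0∞) ≠ 0 := Nat.cast_ne_zero.mpr hn
  have hnt : (n : ℝ≥0∞) ≠ ⊤ := ENNReal.natCast_ne_top n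
  rw [ENNReal.le_div_iff_mul_le (Or.inl hn₀) (Or.inl hnt)]
  refine le_sInf fun r ⟨hr, hr', h⟩ => ?_
  rw [← ENNReal.le_div_iff_mul_le (Or.inl hn₀) (Or.inl hnt)]
  exact rc_le (ENNReal.div_pos hr.ne' hnt) (ENNReal.div_lt_top hr' hn₀).ne (h.nsmul hn)

lemma tendsto_rc_nsmul_of_monotone {ys : ℕ → S} (hys : Monotone ys) {m : ℕ}
    (hm : rc (ys m) ≠ ⊤) :
    Filter.Tendsto (fun n : ℕ => rc (n • ys n)) Filter.atTop (nhds 0) := by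
  have hbound : Filter.Tendsto (fun n : ℕ => rc (ys m) / n) Filter.atTop (nhds 0) := by
    simpa [div_eq_mul_inv] using
      ENNReal.Tendsto.const_mul ENNReal.tendsto_inv_nat_nhds_zero (Or.inr hm)
  refine tendsto_of_tendsto_of_tendsto_of_le_of_le' tendsto_const_nhds hbound
    (Filter.Eventually.of_forall fun _ => zero_le) ?_
  filter_upwards [Filter.eventually_ge_atTop m, Filter.eventually_ge_atTop 1] with n hmn hn
  calc rc (n • ys n) ≤ rc (n • ys m) := rc_antitone (nsmul_le_nsmul_right (hys hmn) n)
    _ ≤ rc (ys m) / n := rc_nsmul_le _ (by omega)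

end

theorem stmt4_general {S : Type*} [CuSemigroup S] (y : S) (ys : ℕ → S)
    (hy : IsFull y) (hys : ∀ n, IsFull (ys n))
    (hmono : ∀ n, ys n ≤ ys (n + 1))
    (hFy : ¬ FNormNonempty y)
    (hlim : (⨅ n, rankRatio y (ys n)) = ⊤) :
    (∀ n, FNormNonempty (ys n)) ∧
      ((∃ m, rc (ys m) ≠ ⊤) →
        Filter.Tendsto (fun n : ℕ => rc (n • ys n)) Filter.atTop (nhds (rc y)) ∧
          rc y = 0) := by
  refine ⟨fun n => (hys n).fNormNonempty_of_rankRatio_eq_top (iInf_eq_top.mp hlim n), ?_⟩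
  rintro ⟨m, hm⟩
  obtain ⟨r₀, -, -, hr₀⟩ := exists_hasRComparison_of_rc_ne_top hm
  have hrc : rc y = 0 := rc_eq_zero fun r hr => hr₀.of_not_fNormNonempty hy hFy hr
  exact ⟨hrc ▸ tendsto_rc_nsmul_of_monotone (monotone_nat_of_le_succ hmono) hm, hrc⟩

/-- Proposition (ExtremeInfiniteRho): for an increasing sequence `(y n)` of full
elements below a full element `y` with `F_y(S) = ∅` and
`lim_n ρ(y, y n) = ∞` (the limit being the infimum of the decreasing sequence):
(1) `F_{y n}(S) ≠ ∅` for every `n`; (2) if `rc(S, y m) < ∞` for some `m`, then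
`lim_n rc(S, n · y n) = rc(S, y) = 0`. -/
theorem stmt4 {S : Type*} [CuSemigroup S] (y : S) (ys : ℕ → S)
    (hy : IsFull y) (hys : ∀ n, IsFull (ys n))
    (hmono : ∀ n, ys n ≤ ys (n + 1)) (hle : ∀ n, ys n ≤ y)
    (hFy : ¬ FNormNonempty y)
    (hlim : (⨅ n, rankRatio y (ys n)) = ⊤) :
    (∀ n, FNormNonempty (ys n)) ∧
      ((∃ m, rc (ys m) ≠ ⊤) →
        Filter.Tendsto (fun n : ℕ => rc (n • ys n)) Filter.atTop (nhds (rc y)) ∧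
          rc y = 0) :=
  stmt4_general y ys hy hys hmono hFy hlim
end

section
/- Let S be a Cu-semigroup, let x, y be full elements of S, and let η ∈ (0,∞). Then: (1) if λ(x) ≤ η·λ(y) for every λ ∈ F(S), then (1/η)·rc(S, y) ≤ rc(S, x); (2) if x ≤ y, then rc(S, y) ≤ rc(S, x); (3) if λ(x) = η·λ(y) for every λ ∈ F(S), then (1/η)·rc(S, y) = rc(S, x). -/
open scoped ENNReal

section

variable {S : Type*} [CuSemigroup S]

theorem HasRComparison.of_forall_mul_le {r r' : ℝ≥0∞} {w w' : S} (h : HasRComparison r w)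
    (hle : ∀ Λ : S → ℝ≥0∞, IsCuFunctional Λ → r * Λ w ≤ r' * Λ w') : HasRComparison r' w' :=
  fun a b hab => h a b fun Λ hΛ => (add_le_add_right (hle Λ hΛ) _).trans (hab Λ hΛ)

theorem inv_mul_rc_le_rc_of_forall_le {x y : S} {η : ℝ≥0∞} (hη0 : η ≠ 0) (hηtop : η ≠ ⊤)
    (h : ∀ Λ : S → ℝ≥0∞, IsCuFunctional Λ → Λ x ≤ η * Λ y) : η⁻¹ * rc y ≤ rc x := by
  refine le_sInf fun r ⟨hr0, hrtop, hr⟩ => ?_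
  rw [ENNReal.inv_mul_le_iff hη0 hηtop]
  refine sInf_le ⟨ENNReal.mul_pos hη0 hr0.ne', ENNReal.mul_ne_top hηtop hrtop,
    hr.of_forall_mul_le fun Λ hΛ => ?_⟩
  calc r * Λ x ≤ r * (η * Λ y) := by gcongr; exact h Λ hΛ
    _ = η * r * Λ y := by ring

theorem rc_antitone_s14 : Antitone (rc : S → ℝ≥0∞) := fun x y hxy => by
  simpa using inv_mul_rc_le_rc_of_forall_le one_ne_zero ENNReal.one_ne_top
    fun Λ hΛ => by simpa using hΛ.mono hxy

end

theorem stmt14_general {S : Type*} [CuSemigroup S] (x y : S)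
    (η : ℝ≥0∞) (hη0 : 0 < η) (hηtop : η ≠ ⊤) :
    ((∀ Λ : S → ℝ≥0∞, IsCuFunctional Λ → Λ x ≤ η * Λ y) → η⁻¹ * rc y ≤ rc x) ∧
      (x ≤ y → rc y ≤ rc x) ∧
      ((∀ Λ : S → ℝ≥0∞, IsCuFunctional Λ → Λ x = η * Λ y) → η⁻¹ * rc y = rc x) := by
  refine ⟨inv_mul_rc_le_rc_of_forall_le hη0.ne' hηtop, fun hxy => rc_antitone_s14 hxy, fun h => ?_⟩
  have hy_le : ∀ Λ : S → ℝ≥0∞, IsCuFunctional Λ → Λ y ≤ η⁻¹ * Λ x := fun Λ hΛ =>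
    (ENNReal.mul_le_iff_le_inv hη0.ne' hηtop).mp (h Λ hΛ).ge
  have hrc_le := inv_mul_rc_le_rc_of_forall_le (ENNReal.inv_ne_zero.mpr hηtop)
    (ENNReal.inv_ne_top.mpr hη0.ne') hy_le
  rw [inv_inv, ENNReal.mul_le_iff_le_inv hη0.ne' hηtop] at hrc_le
  exact le_antisymm (inv_mul_rc_le_rc_of_forall_le hη0.ne' hηtop fun Λ hΛ => (h Λ hΛ).le) hrc_le

/-- Proposition (rcProperties, parts (1)-(3)): for full elements `x, y` and
`η ∈ (0,∞)`:
(1) if `λ(x) ≤ η·λ(y)` for every functional `λ`, then `(1/η)·rc(S,y) ≤ rc(S,x)`;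
(2) if `x ≤ y` then `rc(S,y) ≤ rc(S,x)`;
(3) if `λ(x) = η·λ(y)` for every functional `λ`, then `(1/η)·rc(S,y) = rc(S,x)`. -/
theorem stmt14 {S : Type*} [CuSemigroup S] (x y : S)
    (hx : IsFull x) (hy : IsFull y)
    (η : ℝ≥0∞) (hη0 : 0 < η) (hηtop : η ≠ ⊤) :
    ((∀ Λ : S → ℝ≥0∞, IsCuFunctional Λ → Λ x ≤ η * Λ y) → η⁻¹ * rc y ≤ rc x) ∧
      (x ≤ y → rc y ≤ rc x) ∧
      ((∀ Λ : S → ℝ≥0∞, IsCuFunctional Λ → Λ x = η * Λ y) → η⁻¹ * rc y = rc x) :=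
  stmt14_general x y η hη0 hηtop
end
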